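/- arXiv:2106.02550 — 11 statements merged into one kernel-verified Lean document; each statement's English description precedes it below -/
import Mathlib

section
/- Let Φ = (U, E, D, φ) be a semantic DQBF and let <_E be a linear order on the finite type E. Then Φ is true if and only if for each e ∈ E there exists a semantic propositional formula ψ_e over U ⊕ E that depends only on D(e) ∪ {x ∈ E : D(x) ⊆ D(e) and x <_E e} such that the formula ¬φ ∧ ⋀_{e∈E}(e ↔ ψ_e) — satisfied by an assignment μ of U ⊕ E iff μ falsifies φ and μ(e) = ψ_e(μ) for every e ∈ E — is unsatisfiable. -/
/-- A semantic propositional formula `φ` over variables `V` depends only on the set `S`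
of variables if its value agrees on any two assignments that agree on `S`. -/
def DependsOnlyOn {V : Type*} (φ : (V → Bool) → Bool) (S : Set V) : Prop :=
  ∀ σ τ : V → Bool, (∀ v ∈ S, σ v = τ v) → φ σ = φ τ

/-- `F` is a model of the semantic DQBF with universal variables `U`, existential
variables `E`, dependency map `D` and matrix `φ`: the value of each existential
variable under `F σ` depends only on the restriction of `σ` to its dependency set,
and for every universal assignment `σ` the combined assignment satisfies `φ`. -/
def IsModel {U E : Type*} (D : E → Set U) (φ : (U ⊕ E → Bool) → Bool)
    (F : (U → Bool) → E → Bool) : Prop :=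
  (∀ (e : E) (σ τ : U → Bool), (∀ u ∈ D e, σ u = τ u) → F σ e = F τ e) ∧
  (∀ σ : U → Bool, φ (Sum.elim σ (F σ)) = true)

/-- A semantic DQBF is true if it has a model. -/
def DQBFTrue {U E : Type*} (D : E → Set U) (φ : (U ⊕ E → Bool) → Bool) : Prop :=
  ∃ F : (U → Bool) → E → Bool, IsModel D φ F

/-- A semantic DQBF `Φ = (U, E, D, φ)` with a linear order `<` on `E` is true iff
for each `e ∈ E` there is a semantic formula `ψ e` over `U ⊕ E` depending only on
`D e ∪ {x ∈ E : D x ⊆ D e ∧ x < e}` such that `¬φ ∧ ⋀_{e ∈ E} (e ↔ ψ e)` is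
unsatisfiable. -/
theorem dqbf_true_iff_definitions {U E : Type*} [Fintype U] [Fintype E] [LinearOrder E]
    (D : E → Set U) (φ : (U ⊕ E → Bool) → Bool) :
    DQBFTrue D φ ↔
      ∃ ψ : E → (U ⊕ E → Bool) → Bool,
        (∀ e : E, DependsOnlyOn (ψ e)
          (Sum.inl '' D e ∪ Sum.inr '' {x : E | D x ⊆ D e ∧ x < e})) ∧
        ¬ ∃ μ : U ⊕ E → Bool, φ μ = false ∧ ∀ e : E, ψ e μ = μ (Sum.inr e) := by
  constructor
  · rintro ⟨F, hdep, hsat⟩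
    refine ⟨fun e μ => F (μ ∘ Sum.inl) e, ?_, ?_⟩
    · intro e σ τ h
      exact hdep e _ _ (fun u hu => h (Sum.inl u) (Or.inl ⟨u, hu, rfl⟩))
    · rintro ⟨μ, hfalse, hμ⟩
      have hμeq : μ = Sum.elim (μ ∘ Sum.inl) (F (μ ∘ Sum.inl)) := by
        funext x
        cases x with
        | inl u => rfl
        | inr e => exact (hμ e).symm
      rw [hμeq, hsat] at hfalse
      simp at hfalse
  · rintro ⟨ψ, hdep, hunsat⟩
    have wf : WellFounded ((· < ·) : E → E → Prop) := wellFounded_lt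
    set F : (U → Bool) → E → Bool := fun σ =>
      wf.fix (fun e ih => ψ e (Sum.elim σ (fun x => if h : x < e then ih x h else false)))
      with hF
    have hfix : ∀ σ e, F σ e = ψ e (Sum.elim σ (fun x => if x < e then F σ x else false)) := by
      intro σ e
      show wf.fix _ e = _
      rw [wf.fix_eq]
      rfl
    have hfull : ∀ σ e, F σ e = ψ e (Sum.elim σ (F σ)) := by
      intro σ e
      rw [hfix]
      apply hdep e
      rintro v (⟨u, hu, rfl⟩ | ⟨x, ⟨hDx, hx⟩, rfl⟩)
      · rfl
      · simp [hx]
    refine ⟨F, ?_, ?_⟩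
    · intro e
      induction e using wf.induction with
      | _ e ih =>
        intro σ τ h
        rw [hfull σ e, hfull τ e]
        apply hdep e
        rintro v (⟨u, hu, rfl⟩ | ⟨x, ⟨hDx, hx⟩, rfl⟩)
        · simpa using h u hu
        · simpa using ih x hx σ τ (fun u hu => h u (hDx hu))
    · intro σ
      by_contra hne
      exact hunsat ⟨Sum.elim σ (F σ), by simpa using hne, fun e => (hfull σ e).symm⟩
end

section
/- Let φ be a finite set of clauses over U ⊕ E, let A be a set of arbiter variables with arbiter clauses φ_A, let τ be a partial assignment of arbiter variables in A, and let ρ : U → Bool be a total universal assignment. Then the CNF φ ∪ φ_A ∪ τ ∪ ρ (with τ and ρ viewed as sets of unit clauses over U ⊕ E ⊕ arbiter variables) is satisfiable if and only if the CNF φ^ρ ∪ τ^ρ over arbiter variables is satisfiable. -/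
/-- Arbiter variables: pairs `(e, σ)` of an existential variable `e` and an
assignment `σ` of its dependency set `D e`. -/
abbrev ArbVar (U E : Type*) (D : E → Set U) := Σ e : E, (↥(D e) → Bool)

/-- The combined variable type: universal, existential, and arbiter variables. -/
abbrev CVar (U E : Type*) (D : E → Set U) := U ⊕ E ⊕ ArbVar U E D

/-- An assignment `μ` satisfies a clause (a set of literals, each a pair of a
variable and a polarity) if it satisfies one of its literals. -/
def SatClause {V : Type*} (μ : V → Bool) (C : Set (V × Bool)) : Prop :=
  ∃ l ∈ C, μ l.1 = l.2

/-- An assignment `μ` satisfies a CNF (a set of clauses) if it satisfies every clause. -/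
def SatCNF {V : Type*} (μ : V → Bool) (Φ : Set (Set (V × Bool))) : Prop :=
  ∀ C ∈ Φ, SatClause μ C

/-- Derivability of a clause from a CNF by propositional resolution. -/
inductive ResDeriv {V : Type*} (Φ : Set (Set (V × Bool))) : Set (V × Bool) → Prop
  | ax {C : Set (V × Bool)} : C ∈ Φ → ResDeriv Φ C
  | res {C₁ C₂ : Set (V × Bool)} (v : V) :
      ResDeriv Φ (C₁ ∪ {(v, true)}) → ResDeriv Φ (C₂ ∪ {(v, false)}) →
      ResDeriv Φ (C₁ ∪ C₂)

/-- The clause `{((e,σ), true)} ∪ {(u, ¬σ(u)) : u ∈ D e} ∪ {(e, false)}`. -/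
def arbClausePos {U E : Type*} (D : E → Set U) (a : ArbVar U E D) :
    Set (CVar U E D × Bool) :=
  {(Sum.inr (Sum.inr a), true), (Sum.inr (Sum.inl a.1), false)} ∪
    {l | ∃ u : ↥(D a.1), l = (Sum.inl u.1, ! a.2 u)}

/-- The clause `{((e,σ), false)} ∪ {(u, ¬σ(u)) : u ∈ D e} ∪ {(e, true)}`. -/
def arbClauseNeg {U E : Type*} (D : E → Set U) (a : ArbVar U E D) :
    Set (CVar U E D × Bool) :=
  {(Sum.inr (Sum.inr a), false), (Sum.inr (Sum.inl a.1), true)} ∪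
    {l | ∃ u : ↥(D a.1), l = (Sum.inl u.1, ! a.2 u)}

/-- The arbiter clauses for a set `A` of arbiter variables. -/
def arbiterClauses {U E : Type*} (D : E → Set U) (A : Set (ArbVar U E D)) :
    Set (Set (CVar U E D × Bool)) :=
  arbClausePos D '' A ∪ arbClauseNeg D '' A

/-- Restriction of a total universal assignment `ρ` to the dependency set of `e`. -/
def restrict {U E : Type*} (D : E → Set U) (ρ : U → Bool) (e : E) : ↥(D e) → Bool :=
  fun u => ρ u.1

/-- A clause over `U ⊕ E`, viewed as a clause over the combined variable type. -/
def embClause {U E : Type*} (D : E → Set U) (C : Set ((U ⊕ E) × Bool)) :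
    Set (CVar U E D × Bool) :=
  (fun l => (Sum.map id Sum.inl l.1, l.2)) '' C

/-- A CNF over `U ⊕ E`, viewed as a CNF over the combined variable type. -/
def embCNF {U E : Type*} (D : E → Set U) (φ : Set (Set ((U ⊕ E) × Bool))) :
    Set (Set (CVar U E D × Bool)) :=
  embClause D '' φ

/-- The expansion `φ^ρ` of a CNF `φ` over `U ⊕ E` by a total universal assignment `ρ`:
for each clause of `φ` whose universal literals are all falsified by `ρ`, it contains
the clause obtained by replacing each existential literal on `e` by the literal of the
same polarity on the arbiter variable `(e, ρ|_{D e})`. -/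
def expansion {U E : Type*} (D : E → Set U) (φ : Set (Set ((U ⊕ E) × Bool)))
    (ρ : U → Bool) : Set (Set (ArbVar U E D × Bool)) :=
  {C' | ∃ C ∈ φ, (∀ (u : U) (b : Bool), (Sum.inl u, b) ∈ C → ρ u = !b) ∧
    C' = {p : ArbVar U E D × Bool |
            ∃ e : E, (Sum.inr e, p.2) ∈ C ∧ p.1 = ⟨e, restrict D ρ e⟩}}

/-- Lemma 6 (equisatisfiability): `φ ∪ φ_A ∪ τ ∪ ρ` is satisfiable iff the expansion
`φ^ρ ∪ τ^ρ` over arbiter variables is satisfiable, where `τ` is a partial assignment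
of arbiter variables in `A` and `ρ` a total universal assignment. -/
theorem equisat_expansion {U E : Type*} [Fintype U] [Fintype E] (D : E → Set U)
    (φ : Set (Set ((U ⊕ E) × Bool))) (hfin : φ.Finite)
    (A : Set (ArbVar U E D))
    (T : Set (ArbVar U E D × Bool))
    (hTA : ∀ l ∈ T, l.1 ∈ A)
    (hTdist : ∀ l₁ ∈ T, ∀ l₂ ∈ T, l₁.1 = l₂.1 → l₁ = l₂)
    (ρ : U → Bool) :
    (∃ μ : CVar U E D → Bool,
        SatCNF μ (embCNF D φ ∪ arbiterClauses D A ∪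
          (fun l : ArbVar U E D × Bool =>
            ({(Sum.inr (Sum.inr l.1), l.2)} : Set (CVar U E D × Bool))) '' T ∪
          Set.range (fun u : U => ({(Sum.inl u, ρ u)} : Set (CVar U E D × Bool))))) ↔
    (∃ ν : ArbVar U E D → Bool,
        SatCNF ν (expansion D φ ρ ∪
          (fun l => ({l} : Set (ArbVar U E D × Bool))) ''
            {l ∈ T | l.1.2 = restrict D ρ l.1.1})) := by
  classical
  constructor
  · rintro ⟨μ, hμ⟩
    -- facts about μ
    have hρ : ∀ u : U, μ (Sum.inl u) = ρ u := by
      intro u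
      have h := hμ _ (Or.inr ⟨u, rfl⟩)
      obtain ⟨l, hl, he⟩ := h
      rw [Set.mem_singleton_iff] at hl; subst hl; exact he
    have hT : ∀ l ∈ T, μ (Sum.inr (Sum.inr l.1)) = l.2 := by
      intro l hl
      have h := hμ _ (Or.inl (Or.inr ⟨l, hl, rfl⟩))
      obtain ⟨l', hl', he⟩ := h
      rw [Set.mem_singleton_iff] at hl'; subst hl'; exact he
    have harb : ∀ a ∈ A, a.2 = restrict D ρ a.1 →
        μ (Sum.inr (Sum.inr a)) = μ (Sum.inr (Sum.inl a.1)) := by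
      intro a hA hres
      have hside : ∀ u : ↥(D a.1), μ (Sum.inl u.1) ≠ (! a.2 u) := by
        intro u h
        rw [hρ, hres] at h
        simp [restrict] at h
      obtain ⟨l₁, hl₁, he₁⟩ := hμ _ (Or.inl (Or.inl (Or.inr (Or.inl ⟨a, hA, rfl⟩))))
      obtain ⟨l₂, hl₂, he₂⟩ := hμ _ (Or.inl (Or.inl (Or.inr (Or.inr ⟨a, hA, rfl⟩))))
      have h₁ : μ (Sum.inr (Sum.inr a)) = true ∨ μ (Sum.inr (Sum.inl a.1)) = false := by
        rcases hl₁ with (rfl | h) | ⟨u, rfl⟩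
        · exact Or.inl he₁
        · rw [Set.mem_singleton_iff] at h; subst h; exact Or.inr he₁
        · exact absurd he₁ (hside u)
      have h₂ : μ (Sum.inr (Sum.inr a)) = false ∨ μ (Sum.inr (Sum.inl a.1)) = true := by
        rcases hl₂ with (rfl | h) | ⟨u, rfl⟩
        · exact Or.inl he₂
        · rw [Set.mem_singleton_iff] at h; subst h; exact Or.inr he₂
        · exact absurd he₂ (hside u)
      clear hμ hl₁ hl₂ he₁ he₂
      rcases h₁ with h₁ | h₁ <;> rcases h₂ with h₂ | h₂
      · rw [h₁] at h₂; exact absurd h₂ (by simp)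
      · rw [h₁, h₂]
      · rw [h₁, h₂]
      · rw [h₁] at h₂; exact absurd h₂ (by simp)
    refine ⟨fun a => μ (Sum.inr (Sum.inl a.1)), ?_⟩
    rintro C' (⟨C, hC, hUfals, rfl⟩ | ⟨l, ⟨hlT, hres⟩, rfl⟩)
    · have h := hμ _ (Or.inl (Or.inl (Or.inl ⟨C, hC, rfl⟩)))
      obtain ⟨l', ⟨l, hl, rfl⟩, he⟩ := h
      obtain ⟨v, b⟩ := l
      cases v with
      | inl u =>
        exfalso
        have := hUfals u b hl
        simp only [Sum.map_inl, id_eq] at he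
        rw [hρ] at he
        rw [this] at he
        exact (Bool.not_ne_self b) he
      | inr e =>
        exact ⟨(⟨e, restrict D ρ e⟩, b), ⟨e, hl, rfl⟩, he⟩
    · refine ⟨l, rfl, ?_⟩
      have h1 := hT l hlT
      have h2 := harb l.1 (hTA l hlT) hres
      simp only
      rw [← h2, h1]
  · rintro ⟨ν, hν⟩
    have hνT : ∀ l ∈ T, l.1.2 = restrict D ρ l.1.1 → ν l.1 = l.2 := by
      intro l hl hres
      have h := hν _ (Or.inr ⟨l, ⟨hl, hres⟩, rfl⟩)
      obtain ⟨p, hp, hpe⟩ := h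
      rw [Set.mem_singleton_iff] at hp; subst hp; exact hpe
    set μ : CVar U E D → Bool := fun v =>
      match v with
      | Sum.inl u => ρ u
      | Sum.inr (Sum.inl e) => ν ⟨e, restrict D ρ e⟩
      | Sum.inr (Sum.inr a) => if (a, !ν a) ∈ T then !ν a else ν a
      with hμdef
    have hμu : ∀ u : U, μ (Sum.inl u) = ρ u := fun u => rfl
    have hμe : ∀ e : E, μ (Sum.inr (Sum.inl e)) = ν ⟨e, restrict D ρ e⟩ := fun e => rfl
    have hμa : ∀ a : ArbVar U E D,
        μ (Sum.inr (Sum.inr a)) = if (a, !ν a) ∈ T then !ν a else ν a := fun a => rfl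
    have hμarb : ∀ a : ArbVar U E D, a.2 = restrict D ρ a.1 →
        μ (Sum.inr (Sum.inr a)) = ν a := by
      intro a hres
      rw [hμa]
      by_cases h : (a, !ν a) ∈ T
      · have := hνT _ h hres
        simp at this
      · simp [h]
    have hμT : ∀ l ∈ T, μ (Sum.inr (Sum.inr l.1)) = l.2 := by
      intro l hl
      rw [hμa]
      by_cases h : (l.1, !ν l.1) ∈ T
      · have := hTdist l hl _ h rfl
        rw [if_pos h]
        exact congrArg Prod.snd this ▸ rfl
      · rw [if_neg h]
        rcases Bool.eq_or_eq_not l.2 (ν l.1) with h2 | h2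
        · exact h2.symm
        · exfalso
          apply h
          have : l = (l.1, !ν l.1) := Prod.ext rfl h2
          exact this ▸ hl
    refine ⟨μ, ?_⟩
    rintro C (((⟨C₀, hC₀, rfl⟩ | (⟨a, hA, rfl⟩ | ⟨a, hA, rfl⟩)) | ⟨l, hlT, rfl⟩) | ⟨u, rfl⟩)
    · -- embedded clauses
      by_cases hsat : ∃ u : U, ∃ b : Bool, (Sum.inl u, b) ∈ C₀ ∧ ρ u = b
      · obtain ⟨u, b, hmem, heq⟩ := hsat
        exact ⟨(Sum.inl u, b), ⟨(Sum.inl u, b), hmem, rfl⟩, by rw [hμu]; exact heq⟩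
      · push_neg at hsat
        have hfals : ∀ (u : U) (b : Bool), (Sum.inl u, b) ∈ C₀ → ρ u = !b := by
          intro u b hmem
          have h := hsat u b hmem
          revert h; cases b <;> cases hc : ρ u <;> simp
        have hexp := hν _ (Or.inl ⟨C₀, hC₀, hfals, rfl⟩)
        obtain ⟨p, ⟨e, hmem, hp⟩, hpe⟩ := hexp
        refine ⟨(Sum.inr (Sum.inl e), p.2), ⟨(Sum.inr e, p.2), hmem, rfl⟩, ?_⟩
        rw [hμe]
        rw [hp] at hpe
        exact hpe
    · -- positive arbiter clause
      by_cases hres : a.2 = restrict D ρ a.1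
      · obtain ⟨e, σ⟩ := a
        simp only at hres
        subst hres
        rcases Bool.eq_false_or_eq_true (ν ⟨e, restrict D ρ e⟩) with hb | hb
        · exact ⟨(Sum.inr (Sum.inr ⟨e, restrict D ρ e⟩), true), Or.inl (Or.inl rfl),
            by rw [hμarb _ rfl]; exact hb⟩
        · exact ⟨(Sum.inr (Sum.inl e), false), Or.inl (Or.inr rfl),
            by rw [hμe]; exact hb⟩
      · have : ∃ u : ↥(D a.1), a.2 u ≠ restrict D ρ a.1 u := by
          by_contra h
          push_neg at h
          exact hres (funext h)
        obtain ⟨u, hu⟩ := this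
        refine ⟨(Sum.inl u.1, ! a.2 u), Or.inr ⟨u, rfl⟩, ?_⟩
        rw [hμu]
        have : restrict D ρ a.1 u = ρ u.1 := rfl
        rw [this] at hu
        revert hu
        cases a.2 u <;> cases ρ u.1 <;> simp
    · -- negative arbiter clause
      by_cases hres : a.2 = restrict D ρ a.1
      · obtain ⟨e, σ⟩ := a
        simp only at hres
        subst hres
        rcases Bool.eq_false_or_eq_true (ν ⟨e, restrict D ρ e⟩) with hb | hb
        · exact ⟨(Sum.inr (Sum.inl e), true), Or.inl (Or.inr rfl),
            by rw [hμe]; exact hb⟩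
        · exact ⟨(Sum.inr (Sum.inr ⟨e, restrict D ρ e⟩), false), Or.inl (Or.inl rfl),
            by rw [hμarb _ rfl]; exact hb⟩
      · have : ∃ u : ↥(D a.1), a.2 u ≠ restrict D ρ a.1 u := by
          by_contra h
          push_neg at h
          exact hres (funext h)
        obtain ⟨u, hu⟩ := this
        refine ⟨(Sum.inl u.1, ! a.2 u), Or.inr ⟨u, rfl⟩, ?_⟩
        rw [hμu]
        have : restrict D ρ a.1 u = ρ u.1 := rfl
        rw [this] at hu
        revert hu
        cases a.2 u <;> cases ρ u.1 <;> simp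
    · -- τ unit clauses
      exact ⟨(Sum.inr (Sum.inr l.1), l.2), rfl, hμT l hlT⟩
    · -- ρ unit clauses
      exact ⟨(Sum.inl u, ρ u), rfl, hμu u⟩
end

section
/- Let φ be a finite set of clauses over U ⊕ E, let τ be a partial assignment of arbiter variables, and let ρ : U → Bool be a total universal assignment. If the CNF φ^ρ ∪ τ^ρ is unsatisfiable, then there exists a subset S of the literals of τ^ρ such that the clause consisting of the negations of the literals in S (a subclause of ¬τ^ρ) is derivable by resolution from the expansion φ^ρ. -/
section ResAux

variable {V : Type*}

/-- Negations of a set of literals. -/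
def negLits (L : Set (V × Bool)) : Set (V × Bool) := {m | ∃ l ∈ L, m = (l.1, !l.2)}

/-- Restriction of a CNF by a partial assignment `L` (given as a set of literals):
keep the clauses not satisfied by `L`, removing their literals falsified by `L`. -/
def restrCNF (Φ : Set (Set (V × Bool))) (L : Set (V × Bool)) : Set (Set (V × Bool)) :=
  {D | ∃ C ∈ Φ, C ∩ L = ∅ ∧ D = C \ negLits L}

lemma negLits_singleton (v : V) (b : Bool) :
    negLits ({(v, b)} : Set (V × Bool)) = {(v, !b)} := by
  ext m
  simp [negLits]

/-- Lifting a resolution derivation through a restriction. -/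
lemma lift_deriv (Φ : Set (Set (V × Bool))) (L : Set (V × Bool))
    {D'} (h : ResDeriv (restrCNF Φ L) D') :
    ∃ D, ResDeriv Φ D ∧ D' ⊆ D ∧ D ⊆ D' ∪ negLits L := by
  induction h with
  | ax hC =>
    obtain ⟨C, hCΦ, -, rfl⟩ := hC
    refine ⟨C, .ax hCΦ, Set.diff_subset, fun m hm => ?_⟩
    by_cases hmn : m ∈ negLits L
    · exact Set.mem_union_right _ hmn
    · exact Set.mem_union_left _ ⟨hm, hmn⟩
  | @res C₁ C₂ v h1 h2 ih1 ih2 =>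
    obtain ⟨D₁, hd1, hsub1, hsup1⟩ := ih1
    obtain ⟨D₂, hd2, hsub2, hsup2⟩ := ih2
    set t : V × Bool := (v, true) with ht_def
    set f : V × Bool := (v, false) with hf_def
    have ht : t ∈ D₁ := hsub1 (Set.mem_union_right _ rfl)
    have hf : f ∈ D₂ := hsub2 (Set.mem_union_right _ rfl)
    set A : Set (V × Bool) := (D₁ \ {t}) ∪ ((C₁ ∪ C₂) ∩ {t}) with hA_def
    set B : Set (V × Bool) := (D₂ \ {f}) ∪ ((C₁ ∪ C₂) ∩ {f}) with hB_def
    have hA : D₁ = A ∪ {t} := by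
      ext m
      simp only [hA_def, Set.mem_union, Set.mem_diff, Set.mem_inter_iff,
        Set.mem_singleton_iff]
      constructor
      · intro hm
        by_cases h : m = t
        · right; exact h
        · left; left; exact ⟨hm, h⟩
      · rintro ((⟨hm, -⟩ | ⟨-, rfl⟩) | rfl) <;> first | exact hm | exact ht
    have hB : D₂ = B ∪ {f} := by
      ext m
      simp only [hB_def, Set.mem_union, Set.mem_diff, Set.mem_inter_iff,
        Set.mem_singleton_iff]
      constructor
      · intro hm
        by_cases h : m = f
        · right; exact h
        · left; left; exact ⟨hm, h⟩
      · rintro ((⟨hm, -⟩ | ⟨-, rfl⟩) | rfl) <;> first | exact hm | exact hf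
    rw [hA] at hd1
    rw [hB] at hd2
    refine ⟨A ∪ B, ResDeriv.res v hd1 hd2, ?_, ?_⟩
    · rintro m (hm | hm)
      · by_cases h : m = t
        · exact Set.mem_union_left _ (Set.mem_union_right _ ⟨Or.inl hm, h⟩)
        · exact Set.mem_union_left _ (Set.mem_union_left _ ⟨hsub1 (Or.inl hm), h⟩)
      · by_cases h : m = f
        · exact Set.mem_union_right _ (Set.mem_union_right _ ⟨Or.inr hm, h⟩)
        · exact Set.mem_union_right _ (Set.mem_union_left _ ⟨hsub2 (Or.inl hm), h⟩)
    · rintro m ((⟨hm, hmt⟩ | ⟨hm, -⟩) | (⟨hm, hmf⟩ | ⟨hm, -⟩))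
      · rcases hsup1 hm with (hm' | hm') | hm'
        · exact Or.inl (Or.inl hm')
        · exact absurd hm' hmt
        · exact Or.inr hm'
      · exact Or.inl hm
      · rcases hsup2 hm with (hm' | hm') | hm'
        · exact Or.inl (Or.inr hm')
        · exact absurd hm' hmf
        · exact Or.inr hm'
      · exact Or.inl hm

/-- Resolution completeness over a finite set of variables. -/
lemma res_complete [DecidableEq V] :
    ∀ (n : ℕ) (W : Finset V), W.card = n → ∀ Φ : Set (Set (V × Bool)),
    (∀ C ∈ Φ, ∀ m ∈ C, m.1 ∈ W) → (¬ ∃ ν : V → Bool, SatCNF ν Φ) →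
    ResDeriv Φ ∅ := by
  intro n
  induction n using Nat.strong_induction_on with
  | _ n ih =>
    intro W hWcard Φ hvars hunsat
    rcases W.eq_empty_or_nonempty with rfl | ⟨v, hv⟩
    · -- no variables: the empty clause must be in Φ
      obtain ⟨C, hC, hns⟩ : ∃ C ∈ Φ, ¬ SatClause (fun _ => true) C := by
        by_contra h
        push_neg at h
        exact hunsat ⟨_, h⟩
      have hCe : C = ∅ := by
        ext m
        simp only [Set.mem_empty_iff_false, iff_false]
        intro hm
        exact absurd (hvars C hC m hm) (Finset.notMem_empty _)
      exact hCe ▸ ResDeriv.ax hC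
    · -- eliminate v
      have key : ∀ b : Bool, ResDeriv (restrCNF Φ {(v, b)}) ∅ := by
        intro b
        refine ih (W.erase v).card ?_ (W.erase v) rfl _ ?_ ?_
        · have hpos : 0 < W.card := Finset.card_pos.mpr ⟨v, hv⟩
          rw [← hWcard, Finset.card_erase_of_mem hv]
          omega
        · rintro C' ⟨C, hC, hdisj, rfl⟩ m ⟨hmC, hmn⟩
          refine Finset.mem_erase.mpr ⟨?_, hvars C hC m hmC⟩
          intro hmv
          rcases Bool.eq_or_eq_not m.2 b with h2 | h2
          · have : m = (v, b) := Prod.ext hmv h2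
            have : m ∈ C ∩ {(v, b)} := ⟨hmC, this⟩
            rw [hdisj] at this
            exact this
          · exact hmn ⟨(v, b), rfl, Prod.ext hmv (by simp [h2])⟩
        · rintro ⟨ν, hν⟩
          refine hunsat ⟨Function.update ν v b, ?_⟩
          intro C hC
          by_cases hvb : (v, b) ∈ C
          · exact ⟨(v, b), hvb, Function.update_self _ _ _⟩
          · have hdisj : C ∩ {(v, b)} = ∅ := by
              ext m
              simp only [Set.mem_inter_iff, Set.mem_singleton_iff,
                Set.mem_empty_iff_false, iff_false, not_and]
              rintro hm rfl
              exact hvb hm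
            obtain ⟨m, ⟨hmC, hmn⟩, hms⟩ := hν _ ⟨C, hC, hdisj, rfl⟩
            refine ⟨m, hmC, ?_⟩
            have hmv : m.1 ≠ v := by
              intro hmv
              rcases Bool.eq_or_eq_not m.2 b with h2 | h2
              · have hmeq : m = (v, b) := Prod.ext hmv h2
                exact hvb (hmeq ▸ hmC)
              · exact hmn ⟨(v, b), rfl, Prod.ext hmv (by simp [h2])⟩
            rwa [Function.update_of_ne hmv]
      obtain ⟨Dt, hdT, -, hsupT⟩ := lift_deriv Φ {(v, true)} (key true)
      obtain ⟨Df, hdF, -, hsupF⟩ := lift_deriv Φ {(v, false)} (key false)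
      rw [Set.empty_union, negLits_singleton] at hsupT hsupF
      rcases Set.eq_empty_or_nonempty Dt with rfl | hTne
      · exact hdT
      rcases Set.eq_empty_or_nonempty Df with rfl | hFne
      · exact hdF
      have hDt : Dt = {(v, false)} :=
        Set.Nonempty.subset_singleton_iff hTne |>.mp hsupT
      have hDf : Df = {(v, true)} :=
        Set.Nonempty.subset_singleton_iff hFne |>.mp hsupF
      rw [hDt] at hdT
      rw [hDf] at hdF
      have := ResDeriv.res v (C₁ := ∅) (C₂ := ∅)
        (by simpa using hdF) (by simpa using hdT)
      simpa using this

end ResAux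

/-- If the expansion CNF `φ^ρ ∪ τ^ρ` is unsatisfiable, then there is a subset `S` of the
literals of `τ^ρ` such that the clause of negations of the literals of `S` (a subclause
of `¬τ^ρ`) is derivable by resolution from `φ^ρ`. -/
theorem subclause_of_neg_tau_derivable {U E : Type*} [Fintype U] [Fintype E]
    (D : E → Set U)
    (φ : Set (Set ((U ⊕ E) × Bool))) (hfin : φ.Finite)
    (T : Set (ArbVar U E D × Bool))
    (hTdist : ∀ l₁ ∈ T, ∀ l₂ ∈ T, l₁.1 = l₂.1 → l₁ = l₂)
    (ρ : U → Bool)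
    (hunsat : ¬ ∃ ν : ArbVar U E D → Bool,
      SatCNF ν (expansion D φ ρ ∪
        (fun l => ({l} : Set (ArbVar U E D × Bool))) ''
          {l ∈ T | l.1.2 = restrict D ρ l.1.1})) :
    ∃ S ⊆ {l ∈ T | l.1.2 = restrict D ρ l.1.1},
      ResDeriv (expansion D φ ρ)
        {m : ArbVar U E D × Bool | ∃ l ∈ S, m = (l.1, !l.2)} := by
  classical
  set L : Set (ArbVar U E D × Bool) := {l ∈ T | l.1.2 = restrict D ρ l.1.1} with hL_def
  set Φ : Set (Set (ArbVar U E D × Bool)) := expansion D φ ρ with hΦ_def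
  -- the restricted CNF is unsatisfiable
  have hrunsat : ¬ ∃ ν : ArbVar U E D → Bool, SatCNF ν (restrCNF Φ L) := by
    rintro ⟨ν, hν⟩
    set ν' : ArbVar U E D → Bool := fun a =>
      if (a, true) ∈ L then true else if (a, false) ∈ L then false else ν a with hν'_def
    have hLsat : ∀ l ∈ L, ν' l.1 = l.2 := by
      intro l hl
      rcases Bool.eq_false_or_eq_true l.2 with h2 | h2
      · have hl1 : l = (l.1, true) := Prod.ext rfl h2
        simp only [hν'_def, ← hl1, hl, if_true, h2]
      · have hl1 : l = (l.1, false) := Prod.ext rfl h2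
        have hnt : (l.1, true) ∉ L := by
          intro hmem
          have := congrArg Prod.snd (hTdist _ hmem.1 _ hl.1 rfl)
          simp [h2] at this
        simp only [hν'_def, hnt, if_false, ← hl1, hl, if_true, h2]
    refine hunsat ⟨ν', ?_⟩
    intro C hC
    rcases hC with hC | ⟨l, hl, rfl⟩
    swap
    · exact ⟨l, rfl, hLsat l hl⟩
    by_cases hdisj : C ∩ L = ∅
    · obtain ⟨m, ⟨hmC, hmn⟩, hms⟩ := hν _ ⟨C, hC, hdisj, rfl⟩
      refine ⟨m, hmC, ?_⟩
      have hnt : (m.1, true) ∉ L := by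
        intro hmem
        rcases Bool.eq_false_or_eq_true m.2 with h2 | h2
        · have hmeq : m = (m.1, true) := Prod.ext rfl h2
          have : m ∈ C ∩ L := ⟨hmC, hmeq ▸ hmem⟩
          rw [hdisj] at this
          exact this
        · exact hmn ⟨(m.1, true), hmem, Prod.ext rfl (by simp [h2])⟩
      have hnf : (m.1, false) ∉ L := by
        intro hmem
        rcases Bool.eq_false_or_eq_true m.2 with h2 | h2
        · exact hmn ⟨(m.1, false), hmem, Prod.ext rfl (by simp [h2])⟩
        · have hmeq : m = (m.1, false) := Prod.ext rfl h2
          have : m ∈ C ∩ L := ⟨hmC, hmeq ▸ hmem⟩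
          rw [hdisj] at this
          exact this
      simp only [hν'_def, hnt, hnf, if_false]
      exact hms
    · obtain ⟨m, hmC, hmL⟩ : ∃ m, m ∈ C ∧ m ∈ L := by
        rcases Set.eq_empty_or_nonempty (C ∩ L) with h | ⟨m, hm⟩
        · exact absurd h hdisj
        · exact ⟨m, hm.1, hm.2⟩
      exact ⟨m, hmC, hLsat m hmL⟩
  -- resolution completeness on the restricted CNF
  have : Finite (ArbVar U E D) := by
    have : ∀ e : E, Finite (↥(D e) → Bool) := fun e => by
      have : Finite ↥(D e) := Subtype.finite
      infer_instance
    exact inferInstance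
  cases nonempty_fintype (ArbVar U E D)
  have hres : ResDeriv (restrCNF Φ L) ∅ :=
    res_complete (Finset.univ.card) Finset.univ rfl _
      (fun _ _ m _ => Finset.mem_univ m.1) hrunsat
  obtain ⟨Dc, hDc, -, hsup⟩ := lift_deriv Φ L hres
  rw [Set.empty_union] at hsup
  refine ⟨{l ∈ L | (l.1, !l.2) ∈ Dc}, fun l hl => hl.1, ?_⟩
  have hset : {m : ArbVar U E D × Bool |
      ∃ l ∈ {l ∈ L | (l.1, !l.2) ∈ Dc}, m = (l.1, !l.2)} = Dc := by
    ext m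
    constructor
    · rintro ⟨l, ⟨-, hlD⟩, rfl⟩
      exact hlD
    · intro hm
      obtain ⟨l, hlL, hml⟩ := hsup hm
      exact ⟨l, ⟨hlL, hml ▸ hm⟩, hml⟩
  rw [hset]
  exact hDc
end

section
/- Let φ be a semantic propositional formula over U ⊕ E, let A be a set of arbiter variables with arbiter constraint φ_A, suppose every e ∈ E has a definition ψ_e by D(e) ∪ A in φ ∧ φ_A, and let τ : A → Bool be a total arbiter assignment. If some total assignment σ of U ⊕ E ⊕ A satisfies ¬φ ∧ (⋀_{e∈E}(e ↔ ψ_e)) ∧ τ — i.e., σ falsifies φ, σ(e) = ψ_e(σ) for every e ∈ E, and σ extends τ — then φ ∧ φ_A ∧ τ ∧ σ|_U is unsatisfiable, i.e., no total assignment of U ⊕ E ⊕ A extending both τ and the restriction of σ to U satisfies both φ and φ_A. -/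
attribute [local instance] Classical.propDecidable

/-- `ψ` is a definition for the variable `x` by the set `S` of variables in `φ`:
`ψ` depends only on `S` and `ψ σ = σ x` for every assignment `σ` satisfying `φ`. -/
def IsDefinition {V : Type*} (ψ : (V → Bool) → Bool) (x : V) (S : Set V)
    (φ : (V → Bool) → Bool) : Prop :=
  DependsOnlyOn ψ S ∧ ∀ σ : V → Bool, φ σ = true → ψ σ = σ x

/-- A semantic formula over `U ⊕ E`, viewed as a semantic formula over `U ⊕ E ⊕ X`
(depending only on the variables in `U ⊕ E`). -/
def liftUE {U E X : Type*} (φ : (U ⊕ E → Bool) → Bool) :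
    ((U ⊕ E ⊕ X) → Bool) → Bool :=
  fun μ => φ (Sum.elim (fun u => μ (Sum.inl u)) (fun e => μ (Sum.inr (Sum.inl e))))

/-- The arbiter constraint `φ_A` for a set `A` of arbiter variables: an assignment `μ`
satisfies it iff for every `(e, σ) ∈ A`, if `μ` agrees with `σ` on `D e` then
`μ (e, σ) = μ e`. -/
noncomputable def arbConstraint {U E : Type*} (D : E → Set U)
    (A : Set (ArbVar U E D)) : ((U ⊕ E ⊕ ↥A) → Bool) → Bool :=
  fun μ => decide (∀ a : ↥A, (∀ u : ↥(D a.1.1), μ (Sum.inl u.1) = a.1.2 u) →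
    μ (Sum.inr (Sum.inr a)) = μ (Sum.inr (Sum.inl a.1.1)))

/-- Suppose every existential variable `e` has a definition `ψ e` by `D e ∪ A` in
`φ ∧ φ_A`, and `τ` is a total arbiter assignment. If some total assignment `σ` of
`U ⊕ E ⊕ A` falsifies `φ`, satisfies `σ e = ψ e σ` for every `e ∈ E`, and extends `τ`,
then `φ ∧ φ_A ∧ τ ∧ σ|_U` is unsatisfiable. -/
theorem core_extraction_well_defined {U E : Type*} [Fintype U] [Fintype E]
    (D : E → Set U) (φ : (U ⊕ E → Bool) → Bool) (A : Set (ArbVar U E D))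
    (ψ : E → ((U ⊕ E ⊕ ↥A) → Bool) → Bool)
    (hdef : ∀ e : E, IsDefinition (ψ e) (Sum.inr (Sum.inl e))
      (Sum.inl '' D e ∪ Set.range (fun a : ↥A => Sum.inr (Sum.inr a)))
      (fun μ => liftUE φ μ && arbConstraint D A μ))
    (τ : ↥A → Bool)
    (σ : (U ⊕ E ⊕ ↥A) → Bool)
    (hσfalse : liftUE φ σ = false)
    (hσdef : ∀ e : E, ψ e σ = σ (Sum.inr (Sum.inl e)))
    (hστ : ∀ a : ↥A, σ (Sum.inr (Sum.inr a)) = τ a) :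
    ¬ ∃ μ : (U ⊕ E ⊕ ↥A) → Bool,
      (∀ a : ↥A, μ (Sum.inr (Sum.inr a)) = τ a) ∧
      (∀ u : U, μ (Sum.inl u) = σ (Sum.inl u)) ∧
      liftUE φ μ = true ∧ arbConstraint D A μ = true := by
  rintro ⟨μ, hμτ, hμU, hμφ, hμA⟩
  -- For each e, μ and σ agree on the definition's support, so μ e = σ e.
  have hE : ∀ e : E, μ (Sum.inr (Sum.inl e)) = σ (Sum.inr (Sum.inl e)) := by
    intro e
    obtain ⟨hdep, heval⟩ := hdef e
    have hagree : ∀ v ∈ (Sum.inl '' D e ∪ Set.range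
        (fun a : ↥A => Sum.inr (Sum.inr a)) : Set (U ⊕ E ⊕ ↥A)), μ v = σ v := by
      rintro v (⟨u, _, rfl⟩ | ⟨a, rfl⟩)
      · exact hμU u
      · rw [hμτ a, hστ a]
    have h1 : ψ e μ = ψ e σ := hdep μ σ hagree
    have h2 : ψ e μ = μ (Sum.inr (Sum.inl e)) := by
      apply heval
      simp [hμφ, hμA]
    rw [← h2, h1, hσdef e]
  have : liftUE φ μ = liftUE φ σ := by
    unfold liftUE
    congr 1
    funext v
    cases v with
    | inl u => exact hμU u
    | inr e => exact hE e
  rw [hμφ, hσfalse] at this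
  exact Bool.noConfusion this
end

section
/- Let Φ = (U, E, D, φ) be a semantic DQBF, let A be a set of arbiter variables for Φ and φ_A the arbiter constraint for A. Let Φ' be the DQBF with universal variables U, existential variables E ⊕ A where each e ∈ E keeps dependency set D(e) and each arbiter variable has empty dependency set, and matrix φ ∧ φ_A. Then Φ is true if and only if Φ' is true. -/
attribute [local instance] Classical.propDecidable

/-- Lemma: `Φ = (U, E, D, φ)` is true iff the DQBF `Φ'` with existential variables
`E ⊕ A` (existing existentials keep their dependency sets, arbiter variables get the
empty dependency set) and matrix `φ ∧ φ_A` is true. -/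
theorem dqbf_true_iff_with_arbiters {U E : Type*} [Fintype U] [Fintype E]
    (D : E → Set U) (φ : (U ⊕ E → Bool) → Bool) (A : Set (ArbVar U E D)) :
    DQBFTrue D φ ↔
      DQBFTrue (Sum.elim D (fun _ : ↥A => (∅ : Set U)))
        (fun μ : U ⊕ E ⊕ ↥A → Bool => liftUE φ μ && arbConstraint D A μ) := by
  constructor
  · rintro ⟨F, hdep, hsat⟩
    refine ⟨fun σ => Sum.elim (F σ)
      (fun a => F (fun u => if h : u ∈ D a.1.1 then a.1.2 ⟨u, h⟩ else false) a.1.1), ?_, ?_⟩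
    · rintro (e | a) σ τ h
      · exact hdep e σ τ h
      · rfl
    · intro σ
      rw [Bool.and_eq_true]
      constructor
      · exact hsat σ
      · simp only [arbConstraint, decide_eq_true_eq]
        intro a hag
        simp only [Sum.elim_inr, Sum.elim_inl]
        refine hdep a.1.1 _ σ ?_
        intro u hu
        simp only [dif_pos hu]
        exact (hag ⟨u, hu⟩).symm
  · rintro ⟨F, hdep, hsat⟩
    refine ⟨fun σ e => F σ (Sum.inl e), fun e σ τ h => hdep (Sum.inl e) σ τ h, fun σ => ?_⟩
    have := hsat σ
    rw [Bool.and_eq_true] at this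
    exact this.1
end

section
/- Let ψ be a semantic formula over U ⊕ E ⊕ A and let ¬p ∨ ℓ be a forcing clause for an existential literal ℓ on a variable e ∈ E in ψ, arising from a partial assignment ρ on U ⊕ A (so p is the restriction of ρ to D(e) ∪ A and no total assignment extending ρ satisfies ψ and falsifies ℓ). Then there is no model F of the DQBF Q∃A(∅).ψ such that (i) for every a ∈ dom(p) ∩ A, the constant value F assigns to a equals p(a), and (ii) for some assignment σ : D(e) → Bool that agrees with p on dom(p) ∩ D(e), the value f_e(σ) falsifies ℓ, where f_e is the function on assignments of D(e) induced by the e-component of F (well defined by the dependency condition). -/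
attribute [local instance] Classical.propDecidable

/-- The embedding of `U ⊕ A` into the combined variable type `U ⊕ E ⊕ A`. -/
def embUA {U E A : Type*} : U ⊕ A → U ⊕ E ⊕ A :=
  Sum.elim Sum.inl (fun a => Sum.inr (Sum.inr a))

/-- The existential literal `(e, b)` is forced by the partial assignment `ρ` (with
domain `dom ⊆ U ⊕ A`) in the semantic formula `ψ` over `U ⊕ E ⊕ A`: no total
assignment extending `ρ` satisfies `ψ` and falsifies the literal. -/
def Forced {U E A : Type*} (D : E → Set U) (ψ : (U ⊕ E ⊕ A → Bool) → Bool)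
    (dom : Set (U ⊕ A)) (ρ : U ⊕ A → Bool) (e : E) (b : Bool) : Prop :=
  ¬ ∃ μ : U ⊕ E ⊕ A → Bool,
    (∀ v ∈ dom, μ (embUA v) = ρ v) ∧ ψ μ = true ∧ μ (Sum.inr (Sum.inl e)) = !b

/-- The domain of the restriction `p` of the partial assignment with domain `dom`
to `D e ∪ A`. -/
def pDom {U E A : Type*} (D : E → Set U) (e : E) (dom : Set (U ⊕ A)) : Set (U ⊕ A) :=
  {v ∈ dom | ∀ u : U, v = Sum.inl u → u ∈ D e}

/-- The forcing clause `¬p ∨ ℓ` for the literal `ℓ = (e, b)` forced by `ρ`: it is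
satisfied by `μ` iff `μ` disagrees with `p = ρ|_{D e ∪ A}` on some variable of its
domain or `μ` satisfies `ℓ`. -/
noncomputable def forcingClause {U E A : Type*} (D : E → Set U)
    (dom : Set (U ⊕ A)) (ρ : U ⊕ A → Bool) (e : E) (b : Bool) :
    (U ⊕ E ⊕ A → Bool) → Bool :=
  fun μ => decide ((∃ v ∈ pDom D e dom, μ (embUA v) ≠ ρ v) ∨ μ (Sum.inr (Sum.inl e)) = b)

/-- If `¬p ∨ ℓ` is a forcing clause for the existential literal `ℓ = (e, b)` in `ψ`,
arising from the partial assignment `ρ` with domain `dom`, then there is no model `F` of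
the DQBF `Q∃A(∅).ψ` such that (i) for every `a ∈ dom(p) ∩ A` the constant value `F`
assigns to `a` equals `p a`, and (ii) for some assignment of `D e` agreeing with `p` on
`dom(p) ∩ D e`, the induced Skolem function for `e` falsifies `ℓ`. -/
theorem no_model_violating_forcing_clause {U E A : Type*}
    [Fintype U] [Fintype E] [Fintype A] (D : E → Set U)
    (ψ : (U ⊕ E ⊕ A → Bool) → Bool)
    (dom : Set (U ⊕ A)) (ρ : U ⊕ A → Bool) (e : E) (b : Bool)
    (hforced : Forced D ψ dom ρ e b) :
    ¬ ∃ F : (U → Bool) → (E ⊕ A → Bool),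
      IsModel (Sum.elim D (fun _ : A => (∅ : Set U))) ψ F ∧
      (∀ a : A, Sum.inr a ∈ pDom D e dom →
        ∀ σ : U → Bool, F σ (Sum.inr a) = ρ (Sum.inr a)) ∧
      (∃ σ : U → Bool,
        (∀ u ∈ D e, Sum.inl u ∈ pDom D e dom → σ u = ρ (Sum.inl u)) ∧
        F σ (Sum.inl e) = !b) := by
  rintro ⟨F, ⟨hdep, hsat⟩, hA, σ, hσagree, hσe⟩
  classical
  set σ' : U → Bool := fun u => if Sum.inl u ∈ dom then ρ (Sum.inl u) else σ u with hσ'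
  have hsame : ∀ u ∈ D e, σ' u = σ u := by
    intro u hu
    by_cases h : Sum.inl u ∈ dom
    · have hp : Sum.inl u ∈ pDom D e dom := ⟨h, fun u' h' => by injection h' with h''; exact h'' ▸ hu⟩
      simp only [hσ', if_pos h]
      exact (hσagree u hu hp).symm
    · simp [hσ', h]
  have hFe : F σ' (Sum.inl e) = !b := by
    have := hdep (Sum.inl e) σ' σ (by simpa using hsame)
    rw [this, hσe]
  apply hforced
  refine ⟨Sum.elim σ' (F σ'), ?_, hsat σ', hFe⟩
  rintro (u | a) hv
  · simp [embUA, σ', hv]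
  · have hp : Sum.inr a ∈ pDom D e dom := ⟨hv, fun u h => by cases h⟩
    simpa [embUA] using hA a hp σ'
end

section
/- Let ψ be a semantic formula over U ⊕ E ⊕ A, let C = ¬p ∨ ℓ be a forcing clause for an existential literal ℓ in ψ, and let Ψ = Q∃A(∅).ψ and Ψ' = Q∃A(∅).(ψ ∧ C). Then a family F is a model of Ψ if and only if F is a model of Ψ'. -/
attribute [local instance] Classical.propDecidable

/-- If `C = ¬p ∨ ℓ` is a forcing clause for the existential literal `ℓ = (e, b)` in `ψ`,
then a family `F` is a model of `Q∃A(∅).ψ` iff it is a model of `Q∃A(∅).(ψ ∧ C)`. -/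
theorem model_iff_model_with_forcing_clause {U E A : Type*}
    [Fintype U] [Fintype E] [Fintype A] (D : E → Set U)
    (ψ : (U ⊕ E ⊕ A → Bool) → Bool)
    (dom : Set (U ⊕ A)) (ρ : U ⊕ A → Bool) (e : E) (b : Bool)
    (hforced : Forced D ψ dom ρ e b) :
    ∀ F : (U → Bool) → (E ⊕ A → Bool),
      IsModel (Sum.elim D (fun _ : A => (∅ : Set U))) ψ F ↔
      IsModel (Sum.elim D (fun _ : A => (∅ : Set U)))
        (fun μ => ψ μ && forcingClause D dom ρ e b μ) F := by
  intro F
  constructor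
  · rintro ⟨hdep, hsat⟩
    refine ⟨hdep, fun σ => ?_⟩
    rw [Bool.and_eq_true]
    refine ⟨hsat σ, ?_⟩
    by_contra hC
    simp only [forcingClause, decide_eq_true_eq] at hC
    push_neg at hC
    obtain ⟨hagree, hne⟩ := hC
    have hE : F σ (Sum.inl e) = !b := by
      simp only [Sum.elim_inr, Sum.elim_inl] at hne
      cases hb : F σ (Sum.inl e) <;> cases b <;> simp_all
    set σ' : U → Bool := fun u => if Sum.inl u ∈ dom then ρ (Sum.inl u) else σ u with hσ'
    apply hforced
    refine ⟨Sum.elim σ' (F σ'), ?_, hsat σ', ?_⟩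
    · rintro (u | a) hv
      · simp [embUA, hσ', hv]
      · simp only [embUA, Sum.elim_inr, Sum.elim_inl]
        have hdep' : F σ' (Sum.inr a) = F σ (Sum.inr a) :=
          hdep (Sum.inr a) σ' σ (by simp)
        rw [hdep']
        have hp : Sum.inr a ∈ pDom D e dom := ⟨hv, by simp⟩
        have := hagree _ hp
        simpa [embUA] using this
    · have hfe : F σ' (Sum.inl e) = F σ (Sum.inl e) := by
        apply hdep (Sum.inl e) σ' σ
        intro u hu
        simp only [Sum.elim_inl] at hu
        simp only [hσ']
        by_cases hd : Sum.inl u ∈ dom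
        · simp only [hd, if_true]
          have hp : (Sum.inl u : U ⊕ A) ∈ pDom D e dom :=
            ⟨hd, fun u' h => by cases h; exact hu⟩
          have := hagree _ hp
          simp only [embUA, Sum.elim_inl] at this
          exact this.symm
        · simp [hd]
      simpa [hfe] using hE
  · rintro ⟨hdep, hsat⟩
    refine ⟨hdep, fun σ => ?_⟩
    have h := hsat σ
    rw [Bool.and_eq_true] at h
    exact h.1
end

section
/- Let ψ be a semantic formula over U ⊕ E ⊕ A and let C = ¬p ∨ ℓ be a forcing clause for an existential literal ℓ in ψ. Then the DQBF Q∃A(∅).(ψ ∧ C) is true if and only if the DQBF Q∃A(∅).ψ is true. -/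
attribute [local instance] Classical.propDecidable

/-- If `C = ¬p ∨ ℓ` is a forcing clause for an existential literal `ℓ = (e, b)` in `ψ`,
then the DQBF `Q∃A(∅).(ψ ∧ C)` is true iff `Q∃A(∅).ψ` is true. -/
theorem true_iff_true_with_forcing_clause {U E A : Type*}
    [Fintype U] [Fintype E] [Fintype A] (D : E → Set U)
    (ψ : (U ⊕ E ⊕ A → Bool) → Bool)
    (dom : Set (U ⊕ A)) (ρ : U ⊕ A → Bool) (e : E) (b : Bool)
    (hforced : Forced D ψ dom ρ e b) :
    DQBFTrue (Sum.elim D (fun _ : A => (∅ : Set U)))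
        (fun μ => ψ μ && forcingClause D dom ρ e b μ) ↔
      DQBFTrue (Sum.elim D (fun _ : A => (∅ : Set U))) ψ := by
  constructor
  · rintro ⟨F, hdep, hsat⟩
    exact ⟨F, hdep, fun σ => by
      have := hsat σ; simp only [Bool.and_eq_true] at this; exact this.1⟩
  · rintro ⟨F, hdep, hsat⟩
    refine ⟨F, hdep, fun σ => ?_⟩
    simp only [Bool.and_eq_true]
    refine ⟨hsat σ, ?_⟩
    by_contra hC
    -- the assignment agrees with ρ on pDom and falsifies the literal
    have hC' : ¬ ((∃ v ∈ pDom D e dom,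
        Sum.elim σ (F σ) (embUA v) ≠ ρ v) ∨
        Sum.elim σ (F σ) (Sum.inr (Sum.inl e)) = b) := by
      intro h
      exact hC (by simpa [forcingClause] using h)
    push_neg at hC'
    obtain ⟨hagree, hlit⟩ := hC'
    have hlit' : F σ (Sum.inl e) = !b := by
      cases hb : F σ (Sum.inl e) <;> cases b <;> simp_all
    -- modified universal assignment
    set σ' : U → Bool := fun u => if Sum.inl u ∈ dom then ρ (Sum.inl u) else σ u
      with hσ'
    have hagreeDe : ∀ u ∈ D e, σ u = σ' u := by
      intro u hu
      by_cases hmem : Sum.inl u ∈ dom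
      · have hp : (Sum.inl u : U ⊕ A) ∈ pDom D e dom := by
          refine ⟨hmem, fun u' h => ?_⟩
          cases h; exact hu
        have := hagree _ hp
        simp only [embUA, Sum.elim_inl] at this
        simp [hσ', hmem, this]
      · simp [hσ', hmem]
    have hFe : F σ' (Sum.inl e) = F σ (Sum.inl e) :=
      (hdep (Sum.inl e) σ σ' (by simpa using hagreeDe)).symm
    have hFa : ∀ a : A, F σ' (Sum.inr a) = F σ (Sum.inr a) := fun a =>
      (hdep (Sum.inr a) σ σ' (by simp)).symm
    refine hforced ⟨Sum.elim σ' (F σ'), ?_, hsat σ', by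
      simpa [hFe] using hlit'⟩
    rintro (u | a) hv
    · simp [embUA, hσ', hv]
    · have hp : (Sum.inr a : U ⊕ A) ∈ pDom D e dom := ⟨hv, fun u' h => by cases h⟩
      have := hagree _ hp
      simp only [embUA, Sum.elim_inr] at this ⊢
      rw [hFa]; exact this
end

section
/- Let Φ = (U, E, D, φ) be a semantic DQBF, let <_E be a linear order on the finite type E, and let E' ⊆ E. Suppose for each e ∈ E' there is a semantic propositional formula ψ_e over U ⊕ E that depends only on D(e) ∪ {x ∈ E : D(x) ⊆ D(e) and x <_E e} such that the formula ¬φ ∧ ⋀_{e∈E'}(e ↔ ψ_e) — satisfied by an assignment μ of U ⊕ E iff μ falsifies φ and μ(e) = ψ_e(μ) for every e ∈ E' — is unsatisfiable. Then Φ is true. -/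
attribute [local instance] Classical.propDecidable

noncomputable def modelF {U E : Type*} [Fintype E] [LinearOrder E]
    (E' : Set E) (ψ : E → (U ⊕ E → Bool) → Bool) (σ : U → Bool) : E → Bool :=
  (wellFounded_lt (α := E)).fix (fun e rec =>
    if e ∈ E' then
      ψ e (Sum.elim σ (fun x => if h : x < e then rec x h else false))
    else false)

theorem modelF_eq {U E : Type*} [Fintype E] [LinearOrder E]
    (E' : Set E) (ψ : E → (U ⊕ E → Bool) → Bool) (σ : U → Bool) (e : E) :
    modelF E' ψ σ e = if e ∈ E' then
      ψ e (Sum.elim σ (fun x => if x < e then modelF E' ψ σ x else false))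
    else false := by
  rw [modelF, WellFounded.fix_eq]
  rfl

/-- If for each `e` in a subset `E'` of the existential variables there is a formula
`ψ e` over `U ⊕ E` depending only on `D e ∪ {x ∈ E : D x ⊆ D e ∧ x < e}` such that
`¬φ ∧ ⋀_{e ∈ E'} (e ↔ ψ e)` is unsatisfiable, then the DQBF `Φ = (U, E, D, φ)`
is true. -/
theorem dqbf_true_of_partial_definitions {U E : Type*} [Fintype U] [Fintype E]
    [LinearOrder E] (D : E → Set U) (φ : (U ⊕ E → Bool) → Bool) (E' : Set E)
    (ψ : E → (U ⊕ E → Bool) → Bool)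
    (hdep : ∀ e ∈ E', DependsOnlyOn (ψ e)
      (Sum.inl '' D e ∪ Sum.inr '' {x : E | D x ⊆ D e ∧ x < e}))
    (hunsat : ¬ ∃ μ : U ⊕ E → Bool, φ μ = false ∧ ∀ e ∈ E', ψ e μ = μ (Sum.inr e)) :
    DQBFTrue D φ := by
  refine ⟨modelF E' ψ, ?_, ?_⟩
  · -- dependency condition
    intro e
    induction e using (wellFounded_lt (α := E)).induction with
    | _ e ih =>
      intro σ τ hagree
      rw [modelF_eq, modelF_eq]
      by_cases he : e ∈ E'
      · simp only [he, if_pos]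
        apply hdep e he
        rintro v (⟨u, hu, rfl⟩ | ⟨x, hx, rfl⟩)
        · exact hagree u hu
        · simp only [Sum.elim_inr, hx.2, if_pos]
          exact ih x hx.2 σ τ (fun u hu => hagree u (hx.1 hu))
      · simp [he]
  · -- matrix condition
    intro σ
    by_contra h
    apply hunsat
    refine ⟨Sum.elim σ (modelF E' ψ σ), by simpa using h, ?_⟩
    intro e he
    have := modelF_eq E' ψ σ e
    rw [if_pos he] at this
    simp only [Sum.elim_inr]
    rw [this]
    apply hdep e he
    rintro v (⟨u, hu, rfl⟩ | ⟨x, hx, rfl⟩)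
    · rfl
    · simp [hx.2]
end

section
/- Let Φ = (U, E, D, φ) be a semantic DQBF and let A be a set of arbiter variables for Φ (pairs (e, σ) with e ∈ E and σ : D(e) → Bool). Suppose for each e ∈ E there is a semantic propositional formula ψ_e over U ⊕ E ⊕ A that depends only on D(e) ∪ A, and there is a total assignment τ : A → Bool such that the formula ¬φ ∧ ⋀_{e∈E}(e ↔ ψ_e) ∧ τ is unsatisfiable — i.e., no total assignment of U ⊕ E ⊕ A that extends τ, satisfies μ(e) = ψ_e(μ) for every e ∈ E, and falsifies φ exists. Then Φ is true. -/
attribute [local instance] Classical.propDecidable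

/-- Suppose for each existential variable `e` there is a formula `ψ e` over
`U ⊕ E ⊕ A` depending only on `D e ∪ A`, and there is a total arbiter assignment `τ`
such that `¬φ ∧ ⋀_{e ∈ E} (e ↔ ψ e) ∧ τ` is unsatisfiable. Then the DQBF
`Φ = (U, E, D, φ)` is true. -/
theorem dqbf_true_of_arbiter_definitions {U E : Type*} [Fintype U] [Fintype E]
    (D : E → Set U) (φ : (U ⊕ E → Bool) → Bool) (A : Set (ArbVar U E D))
    (ψ : E → ((U ⊕ E ⊕ ↥A) → Bool) → Bool)
    (hdep : ∀ e : E, DependsOnlyOn (ψ e)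
      (Sum.inl '' D e ∪ Set.range (fun a : ↥A => Sum.inr (Sum.inr a))))
    (τ : ↥A → Bool)
    (hunsat : ¬ ∃ μ : (U ⊕ E ⊕ ↥A) → Bool,
      (∀ a : ↥A, μ (Sum.inr (Sum.inr a)) = τ a) ∧
      (∀ e : E, ψ e μ = μ (Sum.inr (Sum.inl e))) ∧
      liftUE φ μ = false) :
    DQBFTrue D φ := by
  -- base extension of a universal assignment: anything on E, τ on A
  set base : (U → Bool) → (U ⊕ E ⊕ ↥A) → Bool :=
    fun σ => Sum.elim σ (Sum.elim (fun _ => false) τ) with hbase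
  refine ⟨fun σ e => ψ e (base σ), ?_, ?_⟩
  · intro e σ σ' h
    exact hdep e _ _ (by
      rintro v (⟨u, hu, rfl⟩ | ⟨a, rfl⟩)
      · exact h u hu
      · rfl)
  · intro σ
    set μ : (U ⊕ E ⊕ ↥A) → Bool :=
      Sum.elim σ (Sum.elim (fun e => ψ e (base σ)) τ) with hμ
    have hagree : ∀ e : E, ψ e μ = ψ e (base σ) := by
      intro e
      exact hdep e _ _ (by
        rintro v (⟨u, hu, rfl⟩ | ⟨a, rfl⟩) <;> rfl)
    by_contra hfalse
    apply hunsat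
    refine ⟨μ, fun a => rfl, fun e => hagree e, ?_⟩
    have : liftUE φ μ = φ (Sum.elim σ fun e => ψ e (base σ)) := by
      unfold liftUE
      congr 1
    rw [this]
    exact Bool.not_eq_true _ ▸ hfalse
end

section
/- Let φ be a finite set of clauses over U ⊕ E, let A be a set of arbiter variables with arbiter clauses φ_A, let τ be a partial assignment of arbiter variables in A, and let ρ : U → Bool be a total universal assignment. If the CNF φ ∪ φ_A ∪ τ ∪ ρ (with τ and ρ viewed as unit clauses over U ⊕ E ⊕ arbiter variables) is unsatisfiable, then there is a subset S of the literals of τ^ρ such that the clause of negations of the literals of S (a subclause of ¬τ^ρ, hence of ¬τ) is derivable by resolution from the expansion φ^ρ. -/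
/-!
An assignment `μ'` of the arbiter variables satisfying `φ^ρ ∪ τ^ρ` extends to a model of
`φ ∪ φ_A ∪ τ ∪ ρ`: universals follow `ρ`, an existential `e` takes the value of
`(e, ρ|_{D e})`, and an arbiter variable `(e, σ)` with `σ ≠ ρ|_{D e}` (whose arbiter clauses
are already satisfied by a universal literal) takes its value from `τ`. Hence `φ^ρ ∪ τ^ρ` is
unsatisfiable, and over finitely many variables resolution refutes `φ^ρ` relative to the
consistent unit clauses `τ^ρ`: it derives a clause of negated literals of `τ^ρ`.
-/

section Resolution

variable {V : Type*} {Φ : Set (Set (V × Bool))}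

lemma not_satClause_iff {μ : V → Bool} {C : Set (V × Bool)} :
    ¬ SatClause μ C ↔ ∀ l ∈ C, μ l.1 = !l.2 := by
  simp only [SatClause, not_exists, not_and, Bool.eq_not_iff]

lemma satCNF_union {μ : V → Bool} {Ψ : Set (Set (V × Bool))} :
    SatCNF μ (Φ ∪ Ψ) ↔ SatCNF μ Φ ∧ SatCNF μ Ψ := by
  simp only [SatCNF, Set.mem_union, or_imp, forall_and]

lemma ResDeriv.resolve {C₁ C₂ : Set (V × Bool)} (v : V)
    (h₁ : ResDeriv Φ C₁) (h₂ : ResDeriv Φ C₂) (hv₁ : (v, true) ∈ C₁) (hv₂ : (v, false) ∈ C₂) :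
    ResDeriv Φ (C₁ \ {(v, true)} ∪ C₂ \ {(v, false)}) := by
  refine ResDeriv.res v ?_ ?_
  · rwa [Set.sdiff_union_of_subset (Set.singleton_subset_iff.mpr hv₁)]
  · rwa [Set.sdiff_union_of_subset (Set.singleton_subset_iff.mpr hv₂)]

/-- Completeness of resolution, by induction on the set `s` of variables left free around `μ`:
splitting on `v ∈ s`, the two clauses obtained for `μ[v ↦ true]` and `μ[v ↦ false]` either
avoid `v` or resolve on it. -/
lemma exists_resDeriv_falsified [DecidableEq V] (s : Finset V) (μ : V → Bool)
    (h : ∀ ν : V → Bool, (∀ v ∉ s, ν v = μ v) → ¬ SatCNF ν Φ) :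
    ∃ C, ResDeriv Φ C ∧ ∀ l ∈ C, l.1 ∉ s ∧ μ l.1 = !l.2 := by
  induction s using Finset.induction_on generalizing μ with
  | empty =>
    obtain ⟨C, hC, hfalse⟩ : ∃ C ∈ Φ, ¬ SatClause μ C := by
      simpa [SatCNF] using h μ fun _ _ => rfl
    exact ⟨C, .ax hC, fun l hl => ⟨Finset.notMem_empty _, not_satClause_iff.mp hfalse l hl⟩⟩
  | insert v s _ ih =>
    have branch : ∀ b : Bool, ∃ C, ResDeriv Φ C ∧
        ∀ l ∈ C \ {(v, !b)}, l.1 ∉ insert v s ∧ μ l.1 = !l.2 := by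
      intro b
      obtain ⟨C, hC, hl⟩ := ih (Function.update μ v b) fun ν hν => h ν fun w hw => by
        rw [hν w (fun hws => hw (Finset.mem_insert_of_mem hws)),
          Function.update_of_ne (fun hwv : w = v => hw (hwv ▸ Finset.mem_insert_self v s))]
      refine ⟨C, hC, fun l ⟨hlC, hlv⟩ => ?_⟩
      obtain ⟨hls, hlμ⟩ := hl l hlC
      have hne : l.1 ≠ v := by
        rintro hv
        subst hv
        rw [Function.update_self] at hlμ
        exact hlv (by simp [hlμ])
      rw [Function.update_of_ne hne] at hlμ
      exact ⟨by simp [hne, hls], hlμ⟩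
    obtain ⟨Ct, hCt, hlt⟩ := branch true
    obtain ⟨Cf, hCf, hlf⟩ := branch false
    by_cases hvt : (v, false) ∈ Ct
    · by_cases hvf : (v, true) ∈ Cf
      · exact ⟨_, hCf.resolve v hCt hvf hvt, fun l hl => hl.elim (hlf l) (hlt l)⟩
      · exact ⟨Cf, hCf, by rwa [Bool.not_false, Set.sdiff_singleton_eq_self hvf] at hlf⟩
    · exact ⟨Ct, hCt, by rwa [Bool.not_true, Set.sdiff_singleton_eq_self hvt] at hlt⟩

/-- Run `exists_resDeriv_falsified` from the assignment fixed by `L`, leaving free exactly the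
variables that `L` does not mention. -/
theorem exists_subset_resDeriv_neg [Finite V] {L : Set (V × Bool)}
    (hL : ∀ l₁ ∈ L, ∀ l₂ ∈ L, l₁.1 = l₂.1 → l₁ = l₂)
    (h : ¬ ∃ μ : V → Bool, SatCNF μ (Φ ∪ (fun l => ({l} : Set (V × Bool))) '' L)) :
    ∃ S ⊆ L, ResDeriv Φ {m | ∃ l ∈ S, m = (l.1, !l.2)} := by
  classical
  let μ : V → Bool := fun v => decide ((v, true) ∈ L)
  have hμL : ∀ l ∈ L, μ l.1 = l.2 := by
    rintro ⟨v, b⟩ hl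
    cases b
    · exact decide_eq_false fun hvt => absurd (hL _ hvt _ hl rfl) (by simp)
    · exact decide_eq_true hl
  let s : Finset V := (Set.toFinite {v | ∀ l ∈ L, l.1 ≠ v}).toFinset
  have hfalse : ∀ ν : V → Bool, (∀ v ∉ s, ν v = μ v) → ¬ SatCNF ν Φ := by
    intro ν hν hν'
    refine h ⟨ν, satCNF_union.mpr ⟨hν', ?_⟩⟩
    rintro _ ⟨l, hl, rfl⟩
    refine ⟨l, rfl, ?_⟩
    rw [hν l.1 fun hs => (Set.Finite.mem_toFinset _).mp hs l hl rfl]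
    exact hμL l hl
  obtain ⟨C, hC, hCL⟩ := exists_resDeriv_falsified s μ hfalse
  refine ⟨{l ∈ L | (l.1, !l.2) ∈ C}, fun l hl => hl.1, ?_⟩
  convert hC using 1
  ext m
  constructor
  · rintro ⟨l, ⟨-, hlC⟩, rfl⟩
    exact hlC
  intro hm
  obtain ⟨hms, hmμ⟩ := hCL m hm
  rw [Set.Finite.mem_toFinset] at hms
  simp only [Set.mem_ofPred_eq, not_forall, not_not] at hms
  obtain ⟨l, hl, hlm⟩ := hms
  have hm' : m = (l.1, !l.2) := by
    rw [← hμL l hl, hlm, hmμ, Bool.not_not]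
  exact ⟨l, ⟨hl, hm' ▸ hm⟩, hm'⟩

end Resolution

section Expansion

variable {U E : Type*} {D : E → Set U}

lemma satCNF_arbiterClauses {μ : CVar U E D → Bool} (A : Set (ArbVar U E D))
    (h : ∀ a : ArbVar U E D, (∀ u : ↥(D a.1), μ (Sum.inl u.1) = a.2 u) →
      μ (Sum.inr (Sum.inr a)) = μ (Sum.inr (Sum.inl a.1))) :
    SatCNF μ (arbiterClauses D A) := by
  have key : ∀ a : ArbVar U E D,
      SatClause μ (arbClausePos D a) ∧ SatClause μ (arbClauseNeg D a) := by
    intro a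
    by_cases hσ : ∀ u : ↥(D a.1), μ (Sum.inl u.1) = a.2 u
    · have := h a hσ
      cases he : μ (Sum.inr (Sum.inl a.1)) <;> rw [he] at this
      · exact ⟨⟨(Sum.inr (Sum.inl a.1), false), Or.inl (by simp), he⟩,
          ⟨(Sum.inr (Sum.inr a), false), Or.inl (by simp), this⟩⟩
      · exact ⟨⟨(Sum.inr (Sum.inr a), true), Or.inl (by simp), this⟩,
          ⟨(Sum.inr (Sum.inl a.1), true), Or.inl (by simp), he⟩⟩
    · push Not at hσ
      obtain ⟨u, hu⟩ := hσ
      have hu' : μ (Sum.inl u.1) = !a.2 u := Bool.eq_not_iff.mpr hu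
      exact ⟨⟨_, Or.inr ⟨u, rfl⟩, hu'⟩, ⟨_, Or.inr ⟨u, rfl⟩, hu'⟩⟩
  rintro _ (⟨a, -, rfl⟩ | ⟨a, -, rfl⟩)
  exacts [(key a).1, (key a).2]

variable (D)

open Classical in
noncomputable def extendAssign (ρ : U → Bool) (T : Set (ArbVar U E D × Bool))
    (μ' : ArbVar U E D → Bool) : CVar U E D → Bool :=
  Sum.elim ρ <| Sum.elim (fun e => μ' ⟨e, restrict D ρ e⟩) fun a =>
    if a.2 = restrict D ρ a.1 then μ' a else decide ((a, true) ∈ T)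

variable {ρ : U → Bool} {T : Set (ArbVar U E D × Bool)} {μ' : ArbVar U E D → Bool}

lemma satCNF_embCNF_extendAssign {φ : Set (Set ((U ⊕ E) × Bool))}
    (hμ' : SatCNF μ' (expansion D φ ρ)) : SatCNF (extendAssign D ρ T μ') (embCNF D φ) := by
  rintro _ ⟨C, hC, rfl⟩
  by_cases hu : ∃ u b, (Sum.inl u, b) ∈ C ∧ ρ u = b
  · obtain ⟨u, b, hub, hρ⟩ := hu
    exact ⟨_, ⟨_, hub, rfl⟩, hρ⟩
  · push Not at hu
    obtain ⟨p, ⟨e, he, hp⟩, hval⟩ :=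
      hμ' _ ⟨C, hC, fun u b hub => Bool.eq_not_iff.mpr (hu u b hub), rfl⟩
    refine ⟨_, ⟨_, he, rfl⟩, ?_⟩
    rw [hp] at hval
    exact hval

lemma satCNF_arbiterClauses_extendAssign (A : Set (ArbVar U E D)) :
    SatCNF (extendAssign D ρ T μ') (arbiterClauses D A) := by
  refine satCNF_arbiterClauses A fun ⟨e, σ⟩ hσ => ?_
  obtain rfl : σ = restrict D ρ e := funext fun u => (hσ u).symm
  simp [extendAssign]

lemma satCNF_units_extendAssign
    (hT : ∀ l₁ ∈ T, ∀ l₂ ∈ T, l₁.1 = l₂.1 → l₁ = l₂)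
    (hμ' : ∀ l ∈ T, l.1.2 = restrict D ρ l.1.1 → μ' l.1 = l.2) :
    SatCNF (extendAssign D ρ T μ')
      ((fun l : ArbVar U E D × Bool =>
        ({(Sum.inr (Sum.inr l.1), l.2)} : Set (CVar U E D × Bool))) '' T) := by
  classical
  rintro _ ⟨⟨a, b⟩, hl, rfl⟩
  refine ⟨_, rfl, ?_⟩
  by_cases hσ : a.2 = restrict D ρ a.1
  · simpa [extendAssign, hσ] using hμ' _ hl hσ
  · simp only [extendAssign, Sum.elim_inr, if_neg hσ]
    cases b
    · exact decide_eq_false fun ht => absurd (hT _ ht _ hl rfl) (by simp)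
    · exact decide_eq_true hl

end Expansion

theorem subclause_derivable_from_expansion_general {U E : Type*} [Fintype U] [Fintype E]
    (D : E → Set U)
    (φ : Set (Set ((U ⊕ E) × Bool)))
    (A : Set (ArbVar U E D))
    (T : Set (ArbVar U E D × Bool))
    (hTdist : ∀ l₁ ∈ T, ∀ l₂ ∈ T, l₁.1 = l₂.1 → l₁ = l₂)
    (ρ : U → Bool)
    (hunsat : ¬ ∃ μ : CVar U E D → Bool,
      SatCNF μ (embCNF D φ ∪ arbiterClauses D A ∪
        (fun l : ArbVar U E D × Bool =>
          ({(Sum.inr (Sum.inr l.1), l.2)} : Set (CVar U E D × Bool))) '' T ∪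
        Set.range (fun u : U => ({(Sum.inl u, ρ u)} : Set (CVar U E D × Bool))))) :
    ∃ S ⊆ {l ∈ T | l.1.2 = restrict D ρ l.1.1},
      ResDeriv (expansion D φ ρ)
        {m : ArbVar U E D × Bool | ∃ l ∈ S, m = (l.1, !l.2)} := by
  refine exists_subset_resDeriv_neg (fun l₁ h₁ l₂ h₂ => hTdist l₁ h₁.1 l₂ h₂.1) ?_
  rintro ⟨μ', hμ'⟩
  obtain ⟨hexp, hunits⟩ := satCNF_union.mp hμ'
  have hτρ : ∀ l ∈ T, l.1.2 = restrict D ρ l.1.1 → μ' l.1 = l.2 := fun l hl hσ =>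
    (hunits _ ⟨l, ⟨hl, hσ⟩, rfl⟩).elim fun _ ⟨hm, hval⟩ => hm ▸ hval
  refine hunsat ⟨extendAssign D ρ T μ', ?_⟩
  simp only [satCNF_union]
  refine ⟨⟨⟨satCNF_embCNF_extendAssign D hexp, satCNF_arbiterClauses_extendAssign D A⟩,
    satCNF_units_extendAssign D hTdist hτρ⟩, ?_⟩
  rintro _ ⟨u, rfl⟩
  exact ⟨_, rfl, rfl⟩

/-- If the CNF `φ ∪ φ_A ∪ τ ∪ ρ` (with the partial arbiter assignment `τ` and the total
universal assignment `ρ` viewed as unit clauses) is unsatisfiable, then there is a subset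
`S` of the literals of `τ^ρ` such that the clause of negations of the literals of `S`
(a subclause of `¬τ^ρ`, hence of `¬τ`) is derivable by resolution from the expansion
`φ^ρ`. -/
theorem subclause_derivable_from_expansion {U E : Type*} [Fintype U] [Fintype E]
    (D : E → Set U)
    (φ : Set (Set ((U ⊕ E) × Bool))) (hfin : φ.Finite)
    (A : Set (ArbVar U E D))
    (T : Set (ArbVar U E D × Bool))
    (hTA : ∀ l ∈ T, l.1 ∈ A)
    (hTdist : ∀ l₁ ∈ T, ∀ l₂ ∈ T, l₁.1 = l₂.1 → l₁ = l₂)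
    (ρ : U → Bool)
    (hunsat : ¬ ∃ μ : CVar U E D → Bool,
      SatCNF μ (embCNF D φ ∪ arbiterClauses D A ∪
        (fun l : ArbVar U E D × Bool =>
          ({(Sum.inr (Sum.inr l.1), l.2)} : Set (CVar U E D × Bool))) '' T ∪
        Set.range (fun u : U => ({(Sum.inl u, ρ u)} : Set (CVar U E D × Bool))))) :
    ∃ S ⊆ {l ∈ T | l.1.2 = restrict D ρ l.1.1},
      ResDeriv (expansion D φ ρ)
        {m : ArbVar U E D × Bool | ∃ l ∈ S, m = (l.1, !l.2)} :=
  subclause_derivable_from_expansion_general D φ A T hTdist ρ hunsat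
end
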